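/- Let q = p^e with p prime and set t = 2e − 1. For any choice of (not necessarily distinct) points α_1,…,α_t ∈ F_q^* and coefficients γ_1,…,γ_t ∈ F_q, there exist elements m, b, m', b' ∈ F_q with m·b ≠ m'·b' such that Tr(γ_i·(m·α_i + b)) = Tr(γ_i·(m'·α_i + b')) for every i ∈ {1,…,t}. -/
import Mathlib

/-- The absolute trace `Tr(x) = x + x^p + ⋯ + x^{p^{e-1}}` of `F_{p^e}`,
viewed as taking values in `F` (its values lie in the prime subfield). -/
def Tr (p e : ℕ) {F : Type*} [Field F] (x : F) : F :=
  ∑ w ∈ Finset.range e, x ^ p ^ w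

lemma Tr_add (p e : ℕ) {F : Type*} [Field F] [Fact p.Prime] [CharP F p] (x y : F) :
    Tr p e (x + y) = Tr p e x + Tr p e y := by
  unfold Tr
  rw [← Finset.sum_add_distrib]
  exact Finset.sum_congr rfl fun w _ => add_pow_char_pow ..

lemma Tr_pow_p (p e : ℕ) {F : Type*} [Field F] [Fintype F] [Fact p.Prime] [CharP F p]
    (hcard : Fintype.card F = p ^ e) (x : F) : (Tr p e x) ^ p = Tr p e x := by
  unfold Tr
  rw [sum_pow_char]
  have h1 : ∀ w : ℕ, (x ^ p ^ w) ^ p = x ^ p ^ (w + 1) := by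
    intro w; rw [← pow_mul, ← pow_succ]
  simp only [h1]
  have h2 : ∑ w ∈ Finset.range e, x ^ p ^ (w + 1) + x ^ p ^ 0
      = ∑ w ∈ Finset.range e, x ^ p ^ w + x ^ p ^ e := by
    exact (Finset.sum_range_succ' (fun w => x ^ p ^ w) e).symm.trans
      (Finset.sum_range_succ (fun w => x ^ p ^ w) e)
  have h3 : x ^ p ^ e = x := by rw [← hcard, FiniteField.pow_card]
  rw [h3, pow_zero, pow_one] at h2
  exact add_right_cancel h2

/-- With `t = 2e - 1`, for any points `α_1,…,α_t ∈ F_q^*` and coefficients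
`γ_1,…,γ_t ∈ F_q`, there exist two lines `m·x + b` and `m'·x + b'` with distinct coefficient
products whose trace leakages agree at every queried point. -/
theorem exists_trace_transcript_collision
    (F : Type*) [Field F] [Fintype F] (p e : ℕ) (hp : p.Prime)
    (hcard : Fintype.card F = p ^ e)
    (t : ℕ) (ht : t = 2 * e - 1)
    (α γ : Fin t → F) (hα : ∀ z : Fin t, α z ≠ 0) :
    ∃ m b m' b' : F, m * b ≠ m' * b' ∧
      ∀ z : Fin t, Tr p e (γ z * (m * α z + b)) = Tr p e (γ z * (m' * α z + b')) := by
  classical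
  haveI : Fact p.Prime := ⟨hp⟩
  -- e ≥ 1
  have he : 1 ≤ e := by
    rcases Nat.eq_zero_or_pos e with h | h
    · subst h
      rw [pow_zero] at hcard
      have := Fintype.one_lt_card (α := F)
      omega
    · exact h
  -- characteristic
  haveI : CharP F p := by
    obtain ⟨r, hr⟩ := CharP.exists F
    obtain ⟨n, hrp, hc⟩ := @FiniteField.card F _ _ r hr
    have hpr : p = r := by
      have hdvd : p ∣ r ^ (n : ℕ) := by
        rw [← hc, hcard]
        exact dvd_pow_self p (by omega)
      have := hp.dvd_of_dvd_pow hdvd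
      exact ((Nat.prime_dvd_prime_iff_eq hp hrp).mp this)
    rwa [hpr]
  -- the set of trace values
  set S : Finset F := Finset.univ.filter (fun x => x ^ p = x) with hS
  have hScard : S.card ≤ p := by
    have hp1 : 2 ≤ p := hp.two_le
    set P : Polynomial F := Polynomial.X ^ p - Polynomial.X with hP
    have hPne : P ≠ 0 := by
      intro h
      have : P.coeff p = 0 := by rw [h]; simp
      rw [hP] at this
      simp only [Polynomial.coeff_sub, Polynomial.coeff_X_pow, Polynomial.coeff_X] at this
      rw [if_neg (by omega : ¬ (1 : ℕ) = p), sub_zero] at this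
      exact one_ne_zero this
    have hsub : S ⊆ P.roots.toFinset := by
      intro x hx
      simp only [hS, Finset.mem_filter] at hx
      rw [Multiset.mem_toFinset, Polynomial.mem_roots hPne]
      simp [hP, Polynomial.IsRoot, sub_eq_zero, hx.2]
    calc S.card ≤ P.roots.toFinset.card := Finset.card_le_card hsub
      _ ≤ Multiset.card P.roots := Multiset.toFinset_card_le _
      _ ≤ P.natDegree := Polynomial.card_roots' P
      _ ≤ p := by
          rw [hP]
          refine (Polynomial.natDegree_sub_le _ _).trans ?_
          rw [Polynomial.natDegree_X_pow, Polynomial.natDegree_X]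
          omega
  -- trace values are in S
  have hTrS : ∀ x : F, Tr p e x ∈ S := by
    intro x
    simp only [hS, Finset.mem_filter, Finset.mem_univ, true_and]
    exact Tr_pow_p p e hcard x
  -- pigeonhole
  have hcard2 : Fintype.card (Fin t → S) < Fintype.card (F × F) := by
    rw [Fintype.card_fun, Fintype.card_prod, hcard, ← pow_add, Fintype.card_coe,
      Fintype.card_fin]
    calc S.card ^ t ≤ p ^ t := Nat.pow_le_pow_left hScard t
      _ < p ^ (e + e) := Nat.pow_lt_pow_right hp.one_lt (by omega)
  obtain ⟨⟨m₁, b₁⟩, ⟨m₂, b₂⟩, hne, heq⟩ := Fintype.exists_ne_map_eq_of_card_lt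
    (fun mb : F × F => (fun z : Fin t =>
      (⟨Tr p e (γ z * (mb.1 * α z + mb.2)), hTrS _⟩ : S))) hcard2
  have heq' : ∀ z : Fin t,
      Tr p e (γ z * (m₁ * α z + b₁)) = Tr p e (γ z * (m₂ * α z + b₂)) := by
    intro z
    have := congrFun heq z
    exact Subtype.ext_iff.mp this
  -- kernel element
  set m₀ : F := m₁ - m₂ with hm₀
  set b₀ : F := b₁ - b₂ with hb₀
  have hker : ∀ z : Fin t, Tr p e (γ z * (m₀ * α z + b₀)) = 0 := by
    intro z
    have hsplit : γ z * (m₁ * α z + b₁)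
        = γ z * (m₂ * α z + b₂) + γ z * (m₀ * α z + b₀) := by
      rw [hm₀, hb₀]; ring
    have := heq' z
    rw [hsplit, Tr_add] at this
    linear_combination this
  have hker' : ∀ (m b : F) (z : Fin t),
      Tr p e (γ z * (m * α z + b)) = Tr p e (γ z * ((m + m₀) * α z + (b + b₀))) := by
    intro m b z
    have hsplit : γ z * ((m + m₀) * α z + (b + b₀))
        = γ z * (m * α z + b) + γ z * (m₀ * α z + b₀) := by ring
    rw [hsplit, Tr_add, hker z, add_zero]
  have h₀ : m₀ ≠ 0 ∨ b₀ ≠ 0 := by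
    by_contra h
    push_neg at h
    apply hne
    have h1 : m₁ = m₂ := by have := h.1; rw [hm₀, sub_eq_zero] at this; exact this
    have h2 : b₁ = b₂ := by have := h.2; rw [hb₀, sub_eq_zero] at this; exact this
    simp [h1, h2]
  rcases h₀ with h₀ | h₀
  · refine ⟨0, 1 - b₀, 0 + m₀, (1 - b₀) + b₀, ?_, fun z => hker' 0 (1 - b₀) z⟩
    simp only [zero_mul, zero_add]
    intro h
    have : m₀ * ((1 - b₀) + b₀) ≠ 0 := by
      apply mul_ne_zero h₀; simp
    exact this h.symm
  · refine ⟨1 - m₀, 0, (1 - m₀) + m₀, 0 + b₀, ?_, fun z => hker' (1 - m₀) 0 z⟩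
    simp only [mul_zero, zero_add]
    intro h
    have : ((1 - m₀) + m₀) * b₀ ≠ 0 := by
      apply mul_ne_zero _ h₀; simp
    exact this h.symm
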